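/- arXiv:1007.2041 — 5 statements merged into one kernel-verified Lean document; each statement's English description precedes it below -/
import Mathlib

section
/- (Theorem 4.1, real part.) Let q, h, a : ℝ → ℝ³ be a frame of a timelike ruled surface of type M₊¹ and let θ : ℝ → ℝ be smooth. Define the offset frame q₁ = cos θ · q + sin θ · h and a₁ = sin θ · q − cos θ · h. If the Mannheim offset condition ⟨q₁′(s), a₁(s)⟩ = 0 holds for all s, then θ′ = −k₁, i.e., the offset angle satisfies θ(s) = θ(0) − ∫₀ˢ k₁(u) du for all s. -/
/-- The Lorentzian inner product on Minkowski 3-space: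
`⟨a,b⟩ = −a₁b₁ + a₂b₂ + a₃b₃`. -/
noncomputable def lin (u v : Fin 3 → ℝ) : ℝ :=
  -(u 0 * v 0) + u 1 * v 1 + u 2 * v 2

lemma lin_add_left (x y z : Fin 3 → ℝ) : lin (x + y) z = lin x z + lin y z := by
  simp [lin]; ring

lemma lin_smul_left (c : ℝ) (x z : Fin 3 → ℝ) : lin (c • x) z = c * lin x z := by
  simp [lin]; ring

lemma lin_sub_right (x y z : Fin 3 → ℝ) : lin x (y - z) = lin x y - lin x z := by
  simp [lin]; ring

lemma lin_comm (x y : Fin 3 → ℝ) : lin x y = lin y x := by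
  simp [lin]; ring

lemma lin_smul_right (c : ℝ) (x z : Fin 3 → ℝ) : lin x (c • z) = c * lin x z := by
  simp [lin]; ring

/-- Theorem 4.1 (real part): if the Mannheim offset condition
`⟨q₁′, a₁⟩ = 0` holds, then the offset angle satisfies `θ′ = −k₁`, i.e.
`θ(s) = θ(0) − ∫₀ˢ k₁`. -/
theorem mannheim_offset_angle
    -- a frame of a timelike ruled surface of type M₊¹ :
    (q h a : ℝ → Fin 3 → ℝ) (k₁ k₂ : ℝ → ℝ)
    (hk₁ : ContDiff ℝ (⊤ : ℕ∞) k₁) (hk₂ : ContDiff ℝ (⊤ : ℕ∞) k₂)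
    (hqq : ∀ s, lin (q s) (q s) = 1)
    (hhh : ∀ s, lin (h s) (h s) = 1)
    (haa : ∀ s, lin (a s) (a s) = -1)
    (hqh : ∀ s, lin (q s) (h s) = 0)
    (hqa : ∀ s, lin (q s) (a s) = 0)
    (hha : ∀ s, lin (h s) (a s) = 0)
    (hq' : ∀ s, HasDerivAt q (k₁ s • h s) s)
    (hh' : ∀ s, HasDerivAt h (-(k₁ s) • q s + k₂ s • a s) s)
    (ha' : ∀ s, HasDerivAt a (k₂ s • h s) s)
    -- a smooth offset angle function :
    (θ : ℝ → ℝ) (hθ : ContDiff ℝ (⊤ : ℕ∞) θ)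
    -- the offset frame :
    (q₁ a₁ : ℝ → Fin 3 → ℝ)
    (hq₁ : q₁ = fun s => Real.cos (θ s) • q s + Real.sin (θ s) • h s)
    (ha₁ : a₁ = fun s => Real.sin (θ s) • q s - Real.cos (θ s) • h s)
    -- the Mannheim offset condition :
    (hM : ∀ s, lin (deriv q₁ s) (a₁ s) = 0) :
    (∀ s, HasDerivAt θ (-(k₁ s)) s) ∧
      ∀ s, θ s = θ 0 - ∫ u in (0:ℝ)..s, k₁ u := by
  have hθdiff : Differentiable ℝ θ := hθ.differentiable (by simp)
  have key : ∀ s, HasDerivAt θ (-(k₁ s)) s := by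
    intro s
    have hθs : HasDerivAt θ (deriv θ s) s := (hθdiff s).hasDerivAt
    set d := deriv θ s with hd
    have hcos : HasDerivAt (fun t => Real.cos (θ t)) (-Real.sin (θ s) * d) s :=
      (Real.hasDerivAt_cos (θ s)).comp s hθs
    have hsin : HasDerivAt (fun t => Real.sin (θ t)) (Real.cos (θ s) * d) s :=
      (Real.hasDerivAt_sin (θ s)).comp s hθs
    have hq₁' : HasDerivAt q₁ (Real.cos (θ s) • k₁ s • h s + (-Real.sin (θ s) * d) • q s +
        (Real.sin (θ s) • (-(k₁ s) • q s + k₂ s • a s) + (Real.cos (θ s) * d) • h s)) s := by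
      rw [hq₁]; exact ((hcos.smul (hq' s)).add (hsin.smul (hh' s)))
    have hder := hq₁'.deriv
    have hhq : ∀ t, lin (h t) (q t) = 0 := fun t => (lin_comm _ _).trans (hqh t)
    have haq : ∀ t, lin (a t) (q t) = 0 := fun t => (lin_comm _ _).trans (hqa t)
    have hah : ∀ t, lin (a t) (h t) = 0 := fun t => (lin_comm _ _).trans (hha t)
    have hM' := hM s
    rw [hder, ha₁] at hM'
    simp only [smul_smul, smul_add, lin_add_left, lin_smul_left, lin_sub_right,
      lin_smul_right, hqq, hhh, haa, hqh, hqa, hha, hhq, haq, hah] at hM'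
    have hd' : d = -(k₁ s) := by
      have hpyth := Real.sin_sq_add_cos_sq (θ s)
      nlinarith [hM', hpyth]
    rw [← hd']; exact hθs
  refine ⟨key, fun s => ?_⟩
  have hint : IntervalIntegrable k₁ MeasureTheory.volume 0 s :=
    (hk₁.continuous).intervalIntegrable 0 s
  have := intervalIntegral.integral_eq_sub_of_hasDerivAt
    (fun u _ => key u) hint.neg
  rw [intervalIntegral.integral_neg] at this
  linarith [this]
end

section
/- (Theorem 4.1, dual part.) Let q, h, a : ℝ → ℝ³ be a frame of a timelike ruled surface of type M₊¹ with dual parts q*, h*, a* and dual curvatures k₁*, k₂*, and let θ, θ* : ℝ → ℝ be smooth with θ′ = −k₁. Define q₁ = cos θ · q + sin θ · h, a₁ = sin θ · q − cos θ · h, q₁* = cos θ · q* + sin θ · h* + θ*(−sin θ · q + cos θ · h), a₁* = sin θ · q* − cos θ · h* + θ*(cos θ · q + sin θ · h). If the dual Mannheim offset condition ⟨q₁′(s), a₁*(s)⟩ + ⟨(q₁*)′(s), a₁(s)⟩ = 0 holds for all s, then (θ*)′ = −k₁*, i.e., the offset distance satisfies θ*(s) = θ*(0) − ∫₀ˢ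 k₁*(u) du for all s. -/
/-- Theorem 4.1 (dual part): if the dual Mannheim offset condition
`⟨q₁′, a₁*⟩ + ⟨(q₁*)′, a₁⟩ = 0` holds, then the offset distance satisfies
`(θ*)′ = −k₁*`, i.e. `θ*(s) = θ*(0) − ∫₀ˢ k₁*`. -/
theorem mannheim_offset_distance
    -- a frame of a timelike ruled surface of type M₊¹ :
    (q h a : ℝ → Fin 3 → ℝ) (k₁ k₂ : ℝ → ℝ)
    (hk₁ : ContDiff ℝ (⊤ : ℕ∞) k₁) (hk₂ : ContDiff ℝ (⊤ : ℕ∞) k₂)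
    (hqq : ∀ s, lin (q s) (q s) = 1)
    (hhh : ∀ s, lin (h s) (h s) = 1)
    (haa : ∀ s, lin (a s) (a s) = -1)
    (hqh : ∀ s, lin (q s) (h s) = 0)
    (hqa : ∀ s, lin (q s) (a s) = 0)
    (hha : ∀ s, lin (h s) (a s) = 0)
    (hq' : ∀ s, HasDerivAt q (k₁ s • h s) s)
    (hh' : ∀ s, HasDerivAt h (-(k₁ s) • q s + k₂ s • a s) s)
    (ha' : ∀ s, HasDerivAt a (k₂ s • h s) s)
    -- dual parts of the frame (`qm` stands for `q*`, `k₁m` for `k₁*`, etc.) :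
    (qm hm am : ℝ → Fin 3 → ℝ) (k₁m k₂m : ℝ → ℝ)
    (hk₁m : ContDiff ℝ (⊤ : ℕ∞) k₁m) (hk₂m : ContDiff ℝ (⊤ : ℕ∞) k₂m)
    (hqm' : ∀ s, HasDerivAt qm (k₁ s • hm s + k₁m s • h s) s)
    (hhm' : ∀ s, HasDerivAt hm
      (-(k₁ s) • qm s + -(k₁m s) • q s + k₂ s • am s + k₂m s • a s) s)
    (ham' : ∀ s, HasDerivAt am (k₂ s • hm s + k₂m s • h s) s)
    -- dual orthonormality relations :
    (hdqq : ∀ s, lin (q s) (qm s) = 0)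
    (hdhh : ∀ s, lin (h s) (hm s) = 0)
    (hdaa : ∀ s, lin (a s) (am s) = 0)
    (hdqh : ∀ s, lin (q s) (hm s) + lin (qm s) (h s) = 0)
    (hdqa : ∀ s, lin (q s) (am s) + lin (qm s) (a s) = 0)
    (hdha : ∀ s, lin (h s) (am s) + lin (hm s) (a s) = 0)
    -- smooth offset angle θ and offset distance θ* (written `θm`), with θ′ = −k₁ :
    (θ θm : ℝ → ℝ) (hθ : ContDiff ℝ (⊤ : ℕ∞) θ) (hθm : ContDiff ℝ (⊤ : ℕ∞) θm)
    (hθ' : ∀ s, HasDerivAt θ (-(k₁ s)) s)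
    -- the dual offset frame :
    (q₁ a₁ q₁m a₁m : ℝ → Fin 3 → ℝ)
    (hq₁ : q₁ = fun s => Real.cos (θ s) • q s + Real.sin (θ s) • h s)
    (ha₁ : a₁ = fun s => Real.sin (θ s) • q s - Real.cos (θ s) • h s)
    (hq₁m : q₁m = fun s => Real.cos (θ s) • qm s + Real.sin (θ s) • hm s +
      θm s • (-Real.sin (θ s) • q s + Real.cos (θ s) • h s))
    (ha₁m : a₁m = fun s => Real.sin (θ s) • qm s - Real.cos (θ s) • hm s +
      θm s • (Real.cos (θ s) • q s + Real.sin (θ s) • h s))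
    -- the dual Mannheim offset condition :
    (hM : ∀ s, lin (deriv q₁ s) (a₁m s) + lin (deriv q₁m s) (a₁ s) = 0) :
    (∀ s, HasDerivAt θm (-(k₁m s)) s) ∧
      ∀ s, θm s = θm 0 - ∫ u in (0:ℝ)..s, k₁m u := by
  have key : ∀ s, HasDerivAt θm (-(k₁m s)) s := by
    intro s
    have hd : HasDerivAt θm (deriv θm s) s :=
      ((hθm.differentiable (by simp)) s).hasDerivAt
    -- derivative of q₁
    have hQ1 := ((hθ' s).cos.smul (hq' s)).add ((hθ' s).sin.smul (hh' s))
    have hQ1 := hQ1.congr_of_eventuallyEq (f₁ := q₁) (Filter.Eventually.of_forall fun x => by rw [hq₁]; rfl)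
    -- derivative of q₁m
    have hInner := (((hθ' s).sin.neg).smul (hq' s)).add ((hθ' s).cos.smul (hh' s))
    have hQ1m := (((hθ' s).cos.smul (hqm' s)).add ((hθ' s).sin.smul (hhm' s))).add
      (hd.smul hInner)
    have hQ1m := hQ1m.congr_of_eventuallyEq (f₁ := q₁m) (Filter.Eventually.of_forall fun x => by rw [hq₁m]; rfl)
    have hMs := hM s
    rw [hQ1.deriv, hQ1m.deriv, ha₁, ha₁m] at hMs
    have E1 := hqq s; have E2 := hhh s; have E3 := haa s
    have E4 := hqh s; have E5 := hqa s; have E6 := hha s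
    have D4 := hdqa s; have D5 := hdha s
    have P := Real.sin_sq_add_cos_sq (θ s)
    simp only [lin, Pi.add_apply, Pi.smul_apply, Pi.smul_apply', Pi.sub_apply, Pi.neg_apply,
      smul_eq_mul] at hMs E1 E2 E3 E4 E5 E6 D4 D5
    have hkey : deriv θm s = -(k₁m s) := by
      set d := deriv θm s
      set sn := Real.sin (θ s)
      set c := Real.cos (θ s)
      linear_combination (-1 : ℝ) * hMs - (k₁m s + d) * sn ^ 2 * E1
        - (k₁m s + d) * c ^ 2 * E2 + 2 * (k₁m s + d) * sn * c * E4
        + k₂ s * sn ^ 2 * D4 - k₂ s * sn * c * D5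
        + (k₂ s * sn * θm s * c + (k₂m s * sn + θm s * k₂ s * c) * sn) * E5
        + (k₂ s * sn ^ 2 * θm s - (k₂m s * sn + θm s * k₂ s * c) * c) * E6
        - (k₁m s + d) * P
    exact hkey ▸ hd
  refine ⟨key, fun s => ?_⟩
  have hint : ∫ u in (0:ℝ)..s, -(k₁m u) = θm s - θm 0 :=
    intervalIntegral.integral_eq_sub_of_hasDerivAt (fun u _ => key u)
      ((hk₁m.continuous.neg).intervalIntegrable 0 s)
  rw [intervalIntegral.integral_neg] at hint
  linarith
end

section
/- (Equations (33)–(34).) Let q, h, a : ℝ → ℝ³ be a frame of a timelike ruled surface of type M₊¹ with a = q ×_L h, let σ : ℝ → ℝ be smooth, and let b : ℝ → ℝ³ be the striction line of the surface, satisfying b′ = cosh σ · q + sinh σ · a. If the surface is developable, i.e., the Lorentzian mixed product ⟨b′(s), q(s) ×_L q′(s)⟩ = 0 for all s, and k₁(s) ≠ 0 for all s, then σ ≡ 0 and hence b′ = q; that is, the generator of a developable timelike ruled surface is tangent to its striction line. -/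
/-- The Lorentzian cross product on Minkowski 3-space. -/
noncomputable def lcross (u v : Fin 3 → ℝ) : Fin 3 → ℝ :=
  ![u 1 * v 2 - u 2 * v 1, u 0 * v 2 - u 2 * v 0, u 1 * v 0 - u 0 * v 1]

/-- Equations (33)–(34): if a timelike ruled surface of type M₊¹ is developable
(the Lorentzian mixed product `⟨b′, q ×_L q′⟩` vanishes) and `k₁ ≠ 0`, then the
striction `σ` vanishes identically and the generator `q` is tangent to the
striction line `b`. -/
theorem developable_generator_tangent_striction
    -- a frame of a timelike ruled surface of type M₊¹ :
    (q h a : ℝ → Fin 3 → ℝ) (k₁ k₂ : ℝ → ℝ)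
    (hk₁ : ContDiff ℝ (⊤ : ℕ∞) k₁) (hk₂ : ContDiff ℝ (⊤ : ℕ∞) k₂)
    (hqq : ∀ s, lin (q s) (q s) = 1)
    (hhh : ∀ s, lin (h s) (h s) = 1)
    (haa : ∀ s, lin (a s) (a s) = -1)
    (hqh : ∀ s, lin (q s) (h s) = 0)
    (hqa : ∀ s, lin (q s) (a s) = 0)
    (hha : ∀ s, lin (h s) (a s) = 0)
    (hq' : ∀ s, HasDerivAt q (k₁ s • h s) s)
    (hh' : ∀ s, HasDerivAt h (-(k₁ s) • q s + k₂ s • a s) s)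
    (ha' : ∀ s, HasDerivAt a (k₂ s • h s) s)
    (haqh : ∀ s, a s = lcross (q s) (h s))
    -- the striction σ and the striction line b :
    (σ : ℝ → ℝ) (hσ : ContDiff ℝ (⊤ : ℕ∞) σ)
    (b : ℝ → Fin 3 → ℝ)
    (hb' : ∀ s, HasDerivAt b (Real.cosh (σ s) • q s + Real.sinh (σ s) • a s) s)
    -- the surface is developable :
    (hdev : ∀ s, lin (Real.cosh (σ s) • q s + Real.sinh (σ s) • a s)
      (lcross (q s) (k₁ s • h s)) = 0)
    (hk₁ne : ∀ s, k₁ s ≠ 0) :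
    (∀ s, σ s = 0) ∧ ∀ s, HasDerivAt b (q s) s := by
  have key : ∀ s, σ s = 0 := by
    intro s
    have H := hdev s
    have hc : lcross (q s) (k₁ s • h s) = k₁ s • a s := by
      rw [haqh s]; funext i; fin_cases i <;>
        simp [lcross, Pi.smul_apply, smul_eq_mul] <;> ring
    rw [hc] at H
    have A := hqa s
    have B := haa s
    simp only [lin, Pi.add_apply, Pi.smul_apply, smul_eq_mul] at A B H
    have hks : k₁ s * Real.sinh (σ s) = 0 := by
      linear_combination -H + Real.cosh (σ s) * k₁ s * A + Real.sinh (σ s) * k₁ s * B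
    rcases mul_eq_zero.mp hks with h1 | h2
    · exact absurd h1 (hk₁ne s)
    · exact Real.sinh_eq_zero.mp h2
  refine ⟨key, fun s => ?_⟩
  have := hb' s
  rw [key s] at this
  simpa using this
end

section
/- (Developability criterion, equations (38)–(39).) Let q, h, a : ℝ → ℝ³ be a frame of a timelike ruled surface of type M₊¹ with a = q ×_L h, let α : ℝ → ℝ³ satisfy α′ = q (so the surface with base curve α and ruling q is developable, with curvature κ = k₁ and torsion τ = k₂ of α), let θ : ℝ → ℝ satisfy θ′ = −k₁, let θ* ∈ ℝ be a constant, and set β = α + θ* a and q₁ = cos θ · q + sin θ · h. If k₂(s) sin θ(s) ≠ 0, then the Mannheim offset surface with base curve β and ruling q₁ is developable at s, i.e., the Lorentzian mixed product ⟨β′(s), q₁(s) ×_L q₁′(s)⟩ = 0, if and only if sin θ(s) − θ* k₂(s) cos θ(s) = 0. -/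
/-- Equations (38)–(39): the Mannheim offset of a developable timelike ruled
surface of type M₊¹ is developable at `s` if and only if
`sin θ(s) − θ* k₂(s) cos θ(s) = 0`. -/
theorem mannheim_offset_developable_iff
    -- a frame of a timelike ruled surface of type M₊¹ :
    (q h a : ℝ → Fin 3 → ℝ) (k₁ k₂ : ℝ → ℝ)
    (hk₁ : ContDiff ℝ (⊤ : ℕ∞) k₁) (hk₂ : ContDiff ℝ (⊤ : ℕ∞) k₂)
    (hqq : ∀ s, lin (q s) (q s) = 1)
    (hhh : ∀ s, lin (h s) (h s) = 1)
    (haa : ∀ s, lin (a s) (a s) = -1)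
    (hqh : ∀ s, lin (q s) (h s) = 0)
    (hqa : ∀ s, lin (q s) (a s) = 0)
    (hha : ∀ s, lin (h s) (a s) = 0)
    (hq' : ∀ s, HasDerivAt q (k₁ s • h s) s)
    (hh' : ∀ s, HasDerivAt h (-(k₁ s) • q s + k₂ s • a s) s)
    (ha' : ∀ s, HasDerivAt a (k₂ s • h s) s)
    (haqh : ∀ s, a s = lcross (q s) (h s))
    -- the striction line α of the developable surface, with α′ = q :
    (α : ℝ → Fin 3 → ℝ) (hα' : ∀ s, HasDerivAt α (q s) s)
    -- the offset angle θ (with θ′ = −k₁) and the constant offset distance θ* :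
    (θ : ℝ → ℝ) (hθ : ContDiff ℝ (⊤ : ℕ∞) θ) (hθ' : ∀ s, HasDerivAt θ (-(k₁ s)) s)
    (θm : ℝ)
    -- the base curve and the generator of the Mannheim offset :
    (β q₁ : ℝ → Fin 3 → ℝ)
    (hβ : β = fun s => α s + θm • a s)
    (hq₁ : q₁ = fun s => Real.cos (θ s) • q s + Real.sin (θ s) • h s)
    (s : ℝ) (hne : k₂ s * Real.sin (θ s) ≠ 0) :
    lin (deriv β s) (lcross (q₁ s) (deriv q₁ s)) = 0 ↔
      Real.sin (θ s) - θm * k₂ s * Real.cos (θ s) = 0 := by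
  -- derivative of β
  have hβ' : HasDerivAt β (q s + (θm * k₂ s) • h s) s := by
    rw [hβ]
    have := (hα' s).add ((ha' s).const_smul θm)
    simp only [smul_smul] at this
    exact this
  -- derivative of q₁
  have hc : HasDerivAt (fun t => Real.cos (θ t)) (Real.sin (θ s) * k₁ s) s := by
    have := (Real.hasDerivAt_cos (θ s)).comp s (hθ' s)
    simp at this
    exact this
  have hsin : HasDerivAt (fun t => Real.sin (θ t)) (-(Real.cos (θ s) * k₁ s)) s := by
    have := (Real.hasDerivAt_sin (θ s)).comp s (hθ' s)
    simp [mul_comm] at this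
    rw [mul_comm] at this
    exact this
  have hq₁' : HasDerivAt q₁ ((k₂ s * Real.sin (θ s)) • a s) s := by
    rw [hq₁]
    have := (hc.smul (hq' s)).add (hsin.smul (hh' s))
    refine HasDerivAt.congr_deriv this ?_
    funext i
    simp only [Pi.add_apply, Pi.smul_apply, Pi.neg_apply, smul_eq_mul]
    ring
  rw [hβ'.deriv, hq₁'.deriv, hq₁]
  have key : lin (q s + (θm * k₂ s) • h s)
      (lcross (Real.cos (θ s) • q s + Real.sin (θ s) • h s)
        ((k₂ s * Real.sin (θ s)) • a s)) =
      -(k₂ s * Real.sin (θ s)) *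
        (Real.sin (θ s) - θm * k₂ s * Real.cos (θ s)) *
        (lin (q s) (q s) * lin (h s) (h s) - lin (q s) (h s) ^ 2) := by
    rw [haqh s]
    simp only [lin, lcross, Pi.add_apply, Pi.smul_apply, smul_eq_mul,
      Matrix.cons_val_zero, Matrix.cons_val_one, Matrix.head_cons,
      Matrix.cons_val_two, Matrix.tail_cons]
    ring
  rw [key, hqq s, hhh s, hqh s]
  have h1 : -(k₂ s * Real.sin (θ s)) ≠ 0 := by simpa using hne
  constructor
  · intro hM
    have hM' : -(k₂ s * Real.sin (θ s)) *
        (Real.sin (θ s) - θm * k₂ s * Real.cos (θ s)) = 0 := by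
      have : (1 * 1 - (0 : ℝ) ^ 2) = 1 := by norm_num
      rw [this, mul_one] at hM
      exact hM
    exact ((mul_eq_zero.mp hM').resolve_left h1)
  · intro hE
    rw [hE]
    ring
end

section
/- (Case 5, equation (40).) Let q, h, a : ℝ → ℝ³ be an L-periodic frame of a closed timelike trajectory ruled surface of type M₊¹, let α : ℝ → ℝ³ satisfy α′ = q (the surface is developable, with torsion τ = k₂ of the striction line α), let θ : ℝ → ℝ satisfy θ′ = −k₁, let θ* ∈ ℝ be constant, and set β = α + θ* a and q₁ = cos θ · q + sin θ · h. Then the pitch of the Mannheim offset, ℓ_{q₁} := −∫₀ᴸ ⟨β′(s), q₁(s)⟩ ds, satisfies ℓ_{q₁} = −∫₀ᴸ (cos θ(s) + θ* k₂(s) sin θ(s)) ds. -/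
/-- Case 5 (equation (40)): if the closed timelike trajectory ruled surface is
developable, the pitch of its Mannheim offset satisfies
`ℓ_{q₁} = −∫₀ᴸ (cos θ + θ* k₂ sin θ) ds`. -/
theorem mannheim_offset_pitch_developable
    -- an L-periodic frame of a closed timelike trajectory ruled surface of type M₊¹ :
    (q h a : ℝ → Fin 3 → ℝ) (k₁ k₂ : ℝ → ℝ)
    (hk₁ : ContDiff ℝ (⊤ : ℕ∞) k₁) (hk₂ : ContDiff ℝ (⊤ : ℕ∞) k₂)
    (hqq : ∀ s, lin (q s) (q s) = 1)
    (hhh : ∀ s, lin (h s) (h s) = 1)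
    (haa : ∀ s, lin (a s) (a s) = -1)
    (hqh : ∀ s, lin (q s) (h s) = 0)
    (hqa : ∀ s, lin (q s) (a s) = 0)
    (hha : ∀ s, lin (h s) (a s) = 0)
    (hq' : ∀ s, HasDerivAt q (k₁ s • h s) s)
    (hh' : ∀ s, HasDerivAt h (-(k₁ s) • q s + k₂ s • a s) s)
    (ha' : ∀ s, HasDerivAt a (k₂ s • h s) s)
    (L : ℝ) (hL : 0 < L)
    (hpq : Function.Periodic q L) (hph : Function.Periodic h L)
    (hpa : Function.Periodic a L)
    (hpk₁ : Function.Periodic k₁ L) (hpk₂ : Function.Periodic k₂ L)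
    -- the surface is developable: its striction line α satisfies α′ = q :
    (α : ℝ → Fin 3 → ℝ) (hα' : ∀ s, HasDerivAt α (q s) s)
    -- the offset angle θ (with θ′ = −k₁) and the constant offset distance θ* :
    (θ : ℝ → ℝ) (hθ : ContDiff ℝ (⊤ : ℕ∞) θ) (hθ' : ∀ s, HasDerivAt θ (-(k₁ s)) s)
    (θm : ℝ)
    -- the base curve and the generator of the Mannheim offset :
    (β q₁ : ℝ → Fin 3 → ℝ)
    (hβ : β = fun s => α s + θm • a s)
    (hq₁ : q₁ = fun s => Real.cos (θ s) • q s + Real.sin (θ s) • h s) :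
    -(∫ s in (0:ℝ)..L, lin (deriv β s) (q₁ s)) =
      -∫ s in (0:ℝ)..L, (Real.cos (θ s) + θm * k₂ s * Real.sin (θ s)) := by
  have hderiv : ∀ s, deriv β s = q s + θm • (k₂ s • h s) := by
    intro s
    have : HasDerivAt β (q s + θm • (k₂ s • h s)) s := by
      rw [hβ]; exact (hα' s).add ((ha' s).const_smul θm)
    exact this.deriv
  congr 1
  apply intervalIntegral.integral_congr
  intro s _
  have e1 := hqq s; have e2 := hhh s; have e3 := hqh s; have e4 := hqa s
  have e5 := hha s
  simp only [hderiv, hq₁, lin, Pi.add_apply, Pi.smul_apply, smul_eq_mul] at *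
  linear_combination Real.cos (θ s) * e1 + θm * k₂ s * Real.sin (θ s) * e2 +
    (Real.sin (θ s) + θm * k₂ s * Real.cos (θ s)) * e3
end
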